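/- arXiv:0709.4397 — 3 statements merged into one kernel-verified Lean document; each statement's English description precedes it below -/
import Mathlib

section
/- If M ∈ M_n(K) is lower triangular with nonzero diagonal entries, then the sequential mapping M^↓ is a linear automorphism of K^n (i.e., M^s is invertible). -/
/-- The sequential mapping `M^↓`: for `i = 0,...,n-1` in order, perform the
in-place assignment `x_i := ∑ j, M i j * x j` on the (partially updated) vector. -/
def seqMap {K : Type*} [Field K] {n : ℕ} (M : Matrix (Fin n) (Fin n) K)
    (x : Fin n → K) : Fin n → K :=
  Fin.foldl n (fun v i => Function.update v i (∑ j, M i j * v j)) x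

/-- The matrix `M^s` of the sequential mapping of `M`. -/
def seqMat {K : Type*} [Field K] {n : ℕ} (M : Matrix (Fin n) (Fin n) K) :
    Matrix (Fin n) (Fin n) K :=
  fun i j => seqMap M (Pi.single j 1) i

/-- `F_i`: the identity matrix with `i`-th row replaced by the `i`-th row of `M`. -/
def Fmat {K : Type*} [Field K] {n : ℕ} (M : Matrix (Fin n) (Fin n) K) (i : Fin n) :
    Matrix (Fin n) (Fin n) K :=
  (1 : Matrix (Fin n) (Fin n) K).updateRow i (M i)

/-!
Step `i` of the sequential mapping is multiplication by `F_i`, so `M^↓` is multiplication by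
`M^s = F_{n-1} ⋯ F_0`. Since `det F_i = M i i ≠ 0`, this product is invertible.
-/

open Matrix

theorem Matrix.det_one_updateRow {ι R : Type*} [Fintype ι] [DecidableEq ι] [CommRing R]
    (i : ι) (v : ι → R) : ((1 : Matrix ι ι R).updateRow i v).det = v i := by
  have hv : v = ∑ k, v k • (1 : Matrix ι ι R) k := by
    funext j
    simp [one_apply]
  rw [hv, det_updateRow_sum]
  simp [one_apply]

theorem Fin.foldl_mulVec {R ι : Type*} [Fintype ι] [DecidableEq ι] [CommSemiring R] {m : ℕ}
    (g : Fin m → Matrix ι ι R) (x : ι → R) :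
    Fin.foldl m (fun v i => g i *ᵥ v) x = Fin.foldl m (fun A i => g i * A) 1 *ᵥ x := by
  induction m with
  | zero => simp
  | succ m ih => rw [Fin.foldl_succ_last, Fin.foldl_succ_last, ih, mulVec_mulVec]

theorem Fin.isUnit_foldl_mul {G : Type*} [Monoid G] {m : ℕ} (g : Fin m → G)
    (hg : ∀ i, IsUnit (g i)) {a : G} (ha : IsUnit a) :
    IsUnit (Fin.foldl m (fun A i => g i * A) a) := by
  induction m with
  | zero => simpa
  | succ m ih =>
    rw [Fin.foldl_succ_last]
    exact (hg _).mul (ih _ fun i => hg _)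

section
variable {K : Type*} [Field K] {n : ℕ} (M : Matrix (Fin n) (Fin n) K)

theorem Fmat_det (i : Fin n) : (Fmat M i).det = M i i :=
  det_one_updateRow i (M i)

theorem Fmat_mulVec (i : Fin n) (v : Fin n → K) :
    Fmat M i *ᵥ v = Function.update v i (∑ j, M i j * v j) := by
  funext k
  by_cases hk : k = i
  · subst hk
    simp [Fmat, mulVec, dotProduct]
  · simp [hk, Fmat, mulVec, dotProduct, one_apply]

theorem seqMap_eq_foldl_mulVec (x : Fin n → K) :
    seqMap M x = Fin.foldl n (fun A i => Fmat M i * A) 1 *ᵥ x := by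
  simp only [seqMap, ← Fmat_mulVec, Fin.foldl_mulVec]

theorem seqMat_eq_foldl : seqMat M = Fin.foldl n (fun A i => Fmat M i * A) 1 := by
  ext i j
  simp [seqMat, seqMap_eq_foldl_mulVec, mulVec_single]

theorem seqMap_eq_mulVec : seqMap M = (seqMat M *ᵥ ·) := by
  funext x
  rw [seqMap_eq_foldl_mulVec, seqMat_eq_foldl]

theorem isUnit_seqMat (hd : ∀ i, M i i ≠ 0) : IsUnit (seqMat M) := by
  rw [seqMat_eq_foldl]
  refine Fin.isUnit_foldl_mul _ (fun i => ?_) isUnit_one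
  rw [isUnit_iff_isUnit_det, Fmat_det]
  exact (hd i).isUnit

end

theorem stmt4_general {K : Type*} [Field K] {n : ℕ} (M : Matrix (Fin n) (Fin n) K)
    (hd : ∀ i, M i i ≠ 0) :
    Function.Bijective (seqMap M) ∧ IsUnit (seqMat M) := by
  have hunit := isUnit_seqMat M hd
  rw [seqMap_eq_mulVec]
  exact ⟨⟨mulVec_injective_iff_isUnit.2 hunit, mulVec_surjective_iff_isUnit.2 hunit⟩, hunit⟩

/-- If `M` is lower triangular with nonzero diagonal, the sequential mapping is a
linear automorphism of `K^n`, i.e. `M^s` is invertible. -/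
theorem stmt4 {K : Type*} [Field K] {n : ℕ} (M : Matrix (Fin n) (Fin n) K)
    (hlt : ∀ i j : Fin n, i < j → M i j = 0) (hd : ∀ i, M i i ≠ 0) :
    Function.Bijective (seqMap M) ∧ IsUnit (seqMat M) :=
  stmt4_general M hd
end

section
/- For every linear mapping E : K^n → K^n with n > 0, the assignment X := E(X) can be computed by a straight-line program of at most 2n−1 in-place linear assignments of components of X, whose first n steps form the sequential program of some matrix M and whose remaining steps each have the form x_i := x_i + x_j with j > i. -/
/-- Run a straight-line program: each instruction `(i, c)` performs the in-place
linear assignment `x_i := ∑ j, c j * x j`. -/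
def runProg {K : Type*} [Field K] {n : ℕ} (P : List (Fin n × (Fin n → K)))
    (x : Fin n → K) : Fin n → K :=
  P.foldl (fun v ic => Function.update v ic.1 (∑ j, ic.2 j * v j)) x

/-!
Let `A` be the matrix of `E`. Gaussian elimination, column by column, chooses for each row `i`
at most one partner row `j > i` such that `B`, the matrix with rows `A i - A j` (or `A i` when
`i` has no partner), has the property `RowPrefixSpanned`: the part of row `i` left of the
diagonal is a combination of the same parts of the earlier rows. Such a `B` is computed in place
by a sequential program, since when row `i` is processed the earlier coordinates already hold
`(B x)_k`. Then the additions `x_i := x_i + x_j`, performed for decreasing `i`, turn `B x` back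
into `A x`; the last row has no partner, so there are at most `n - 1` of them.
-/

open Matrix

section Piecewise

variable {α : Type*} {n : ℕ}

def piecewisePrefix (p : ℕ) (y x : Fin n → α) : Fin n → α :=
  fun k => if (k : ℕ) < p then y k else x k

lemma update_piecewisePrefix_left {p : ℕ} (hp : p < n) (y x : Fin n → α) :
    Function.update (piecewisePrefix p y x) ⟨p, hp⟩ (y ⟨p, hp⟩) =
      piecewisePrefix (p + 1) y x := by
  funext k
  by_cases hk : k = ⟨p, hp⟩
  · subst hk; simp [piecewisePrefix]
  · have : (k : ℕ) < p ↔ (k : ℕ) < p + 1 := by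
      have : (k : ℕ) ≠ p := fun h => hk (Fin.ext h)
      omega
    simp only [Function.update_of_ne hk, piecewisePrefix, this]

lemma update_piecewisePrefix_right {p : ℕ} (hp : p < n) (y x : Fin n → α) :
    Function.update (piecewisePrefix (p + 1) y x) ⟨p, hp⟩ (x ⟨p, hp⟩) =
      piecewisePrefix p y x := by
  rw [← update_piecewisePrefix_left hp, Function.update_idem, Function.update_eq_self_iff]
  simp [piecewisePrefix]

end Piecewise

section

variable {K : Type*} [Field K] {n m : ℕ}

section Programs

lemma runProg_append (P Q : List (Fin n × (Fin n → K))) (x : Fin n → K) :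
    runProg (P ++ Q) x = runProg Q (runProg P x) :=
  List.foldl_append

lemma runProg_singleton (i : Fin n) (c x : Fin n → K) :
    runProg [(i, c)] x = Function.update x i (c ⬝ᵥ x) :=
  rfl

lemma runProg_ofFn_of_dotProduct_piecewisePrefix (M : Matrix (Fin n) (Fin n) K)
    (y x : Fin n → K) (hM : ∀ i : Fin n, M i ⬝ᵥ piecewisePrefix i y x = y i) :
    runProg (List.ofFn fun i => (i, M i)) x = y := by
  have key : ∀ p ≤ n,
      runProg ((List.ofFn fun i => (i, M i)).take p) x = piecewisePrefix p y x := by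
    intro p
    induction p with
    | zero => intro _; funext k; simp [runProg, piecewisePrefix]
    | succ p ih =>
      intro (hp : p < n)
      have hget : (List.ofFn fun i => (i, M i))[p]? = some (⟨p, hp⟩, M ⟨p, hp⟩) := by simp [hp]
      rw [List.take_add_one, hget, Option.toList_some, runProg_append, ih hp.le,
        runProg_singleton, hM ⟨p, hp⟩, update_piecewisePrefix_left]
  have hfull := key n le_rfl
  rw [List.take_of_length_le (by simp)] at hfull
  rw [hfull]
  funext k
  simp [piecewisePrefix]

def addInstr (i j : Fin n) : Fin n × (Fin n → K) :=
  (i, Pi.single i 1 + Pi.single j 1)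

lemma runProg_addInstr (i j : Fin n) (x : Fin n → K) :
    runProg [addInstr i j] x = Function.update x i (x i + x j) := by
  rw [addInstr, runProg_singleton, add_dotProduct, single_one_dotProduct, single_one_dotProduct]

end Programs

section Partners

def subPartner {V : Type*} [AddCommGroup V] (A : Fin n → V) (i : Fin n) : Option (Fin n) → V
  | none => A i
  | some j => A i - A j

def subPartners {V : Type*} [AddCommGroup V] (f : Fin n → Option (Fin n)) (A : Fin n → V) :
    Fin n → V :=
  fun i => subPartner A i (f i)

lemma subPartners_mulVec (f : Fin n → Option (Fin n)) (A : Matrix (Fin n) (Fin m) K)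
    (x : Fin m → K) : subPartners f A *ᵥ x = subPartners f (A *ᵥ x) := by
  funext i
  change subPartners f A i ⬝ᵥ x = _
  cases hi : f i <;> simp [subPartners, subPartner, hi, mulVec, sub_dotProduct]

def addProg (f : Fin n → Option (Fin n)) : ℕ → List (Fin n × (Fin n → K))
  | 0 => []
  | p + 1 =>
    (if h : p < n then ((f ⟨p, h⟩).map (addInstr ⟨p, h⟩)).toList else []) ++ addProg f p

variable {f : Fin n → Option (Fin n)}

lemma length_addProg_le (p : ℕ) : (addProg (K := K) f p).length ≤ p := by
  induction p with
  | zero => simp [addProg]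
  | succ p ih =>
    rw [addProg, List.length_append]
    split_ifs
    · cases f _ <;> simp <;> omega
    · simp; omega

lemma length_addProg_le_pred (hf : ∀ i j, f i = some j → i < j) :
    (addProg (K := K) f n).length ≤ n - 1 := by
  obtain _ | n := n
  · simp [addProg]
  have hlast : f ⟨n, n.lt_succ_self⟩ = none := by
    by_contra h
    obtain ⟨j, hj⟩ := Option.ne_none_iff_exists'.mp h
    exact (Fin.le_last j).not_gt (hf _ _ hj)
  rw [addProg, dif_pos n.lt_succ_self, hlast]
  simpa using length_addProg_le (K := K) (f := f) n

lemma mem_addProg (hf : ∀ i j, f i = some j → i < j) {p : ℕ} {ic : Fin n × (Fin n → K)}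
    (hic : ic ∈ addProg f p) : ∃ i j : Fin n, i < j ∧ ic = addInstr i j := by
  induction p with
  | zero => simp [addProg] at hic
  | succ p ih =>
    rw [addProg, List.mem_append] at hic
    obtain hic | hic := hic
    · split_ifs at hic with hp
      · obtain ⟨j, hj, rfl⟩ : ∃ j, f ⟨p, hp⟩ = some j ∧ addInstr ⟨p, hp⟩ j = ic := by
          simpa using hic
        exact ⟨_, j, hf _ _ hj, rfl⟩
      · simp at hic
    · exact ih hic

lemma runProg_addProg_piecewisePrefix (hf : ∀ i j, f i = some j → i < j) (y : Fin n → K) :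
    ∀ p ≤ n, runProg (addProg f p) (piecewisePrefix p (subPartners f y) y) = y := by
  intro p
  induction p with
  | zero => intro _; funext k; simp [addProg, runProg, piecewisePrefix]
  | succ p ih =>
    intro (hp : p < n)
    suffices h : runProg ((f ⟨p, hp⟩).map (addInstr ⟨p, hp⟩)).toList
        (piecewisePrefix (p + 1) (subPartners f y) y) = piecewisePrefix p (subPartners f y) y by
      rw [addProg, dif_pos hp, runProg_append, h, ih hp.le]
    rw [← update_piecewisePrefix_right hp]
    cases hj : f ⟨p, hp⟩ with
    | none =>
      rw [Option.map_none, Option.toList_none, runProg, List.foldl_nil, eq_comm,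
        Function.update_eq_self_iff]
      simp [piecewisePrefix, subPartners, subPartner, hj]
    | some j =>
      have hpj : p < (j : ℕ) := hf _ _ hj
      rw [Option.map_some, Option.toList_some, runProg_addInstr]
      congr 1
      simp [piecewisePrefix, subPartners, subPartner, hj, not_le.mpr hpj]

lemma runProg_addProg_subPartners (hf : ∀ i j, f i = some j → i < j) (y : Fin n → K) :
    runProg (addProg f n) (subPartners f y) = y := by
  have key := runProg_addProg_piecewisePrefix hf y n le_rfl
  rwa [show piecewisePrefix n (subPartners f y) y = subPartners f y by
    funext k; simp [piecewisePrefix]] at key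

end Partners

section PrefixSpan

def RowPrefixSpanned (B : Matrix (Fin n) (Fin m) K) : Prop :=
  ∀ i : Fin n, ∃ c : Fin n → K, (∀ k, i ≤ k → c k = 0) ∧
    ∀ t : Fin m, (t : ℕ) < i → B i t = (c ᵥ* B) t

lemma dotProduct_piecewisePrefix_mulVec (B : Matrix (Fin n) (Fin n) K) (i : Fin n)
    (c : Fin n → K) (hc0 : ∀ k, i ≤ k → c k = 0)
    (hc : ∀ t : Fin n, (t : ℕ) < i → B i t = (c ᵥ* B) t) (x : Fin n → K) :
    (fun j => if j < i then c j else B i j - (c ᵥ* B) j) ⬝ᵥ piecewisePrefix i (B *ᵥ x) x =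
      (B *ᵥ x) i := by
  set w : Fin n → K := fun j => if j < i then 0 else B i j - (c ᵥ* B) j
  have hsplit : ∀ j, (if j < i then c j else B i j - (c ᵥ* B) j) *
      piecewisePrefix i (B *ᵥ x) x j = c j * (B *ᵥ x) j + w j * x j := by
    intro j
    by_cases hj : j < i
    · simp [w, piecewisePrefix, hj, Fin.lt_def.mp hj]
    · simp [w, piecewisePrefix, hj, hc0 j (not_lt.mp hj), Fin.lt_def.not.mp hj]
  have hrow : c ᵥ* B + w = B i := by
    funext t
    by_cases ht : t < i
    · simp [w, ht, ← hc t ht]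
    · simp [w, ht]
  calc _ = c ⬝ᵥ (B *ᵥ x) + w ⬝ᵥ x := by
        simp only [dotProduct, hsplit, Finset.sum_add_distrib]
    _ = (c ᵥ* B + w) ⬝ᵥ x := by rw [dotProduct_mulVec, add_dotProduct]
    _ = (B *ᵥ x) i := by rw [hrow]; rfl

lemma RowPrefixSpanned.exists_runProg_eq_mulVec {B : Matrix (Fin n) (Fin n) K}
    (hB : RowPrefixSpanned B) :
    ∃ M : Matrix (Fin n) (Fin n) K, ∀ x, runProg (List.ofFn fun i => (i, M i)) x = B *ᵥ x := by
  choose c hc0 hc using hB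
  exact ⟨fun i j => if j < i then c i j else B i j - (c i ᵥ* B) j, fun x =>
    runProg_ofFn_of_dotProduct_piecewisePrefix _ _ _ fun i =>
      dotProduct_piecewisePrefix_mulVec B i (c i) (hc0 i) (hc i) x⟩

lemma rowPrefixSpanned_of_sub_vecMulVec (B : Matrix (Fin (n + 1)) (Fin m) K)
    (μ : Fin (n + 1) → K) (h : RowPrefixSpanned (B - vecMulVec μ (B 0))) :
    RowPrefixSpanned B := by
  intro i
  obtain rfl | hi := eq_or_ne i 0
  · exact ⟨0, by simp, fun t ht => by simp at ht⟩
  obtain ⟨c, hc0, hc⟩ := h i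
  refine ⟨c + (μ i - c ⬝ᵥ μ) • Pi.single 0 1, fun k hk => ?_, fun t ht => ?_⟩
  · have hk0 : k ≠ 0 := by
      rintro rfl
      exact hi (nonpos_iff_eq_zero.mp hk)
    simp [hc0 k hk, hk0]
  · have := hc t ht
    simp only [Matrix.sub_apply, vecMulVec_apply, vecMul_sub, vecMul_vecMulVec, Pi.sub_apply,
      Pi.smul_apply, smul_eq_mul] at this
    simp only [add_vecMul, smul_vecMul, single_one_vecMul, Pi.add_apply, Pi.smul_apply,
      smul_eq_mul, row_apply]
    linear_combination this

lemma rowPrefixSpanned_of_forall_succ_zero (B : Matrix (Fin (n + 1)) (Fin (m + 1)) K)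
    (h0 : ∀ k : Fin n, B k.succ 0 = 0) (h : RowPrefixSpanned (B.submatrix Fin.succ Fin.succ)) :
    RowPrefixSpanned B := by
  intro i
  cases i using Fin.cases with
  | zero => exact ⟨0, by simp, fun t ht => by simp at ht⟩
  | succ i =>
    obtain ⟨c, hc0, hc⟩ := h i
    have hvec : ∀ t, (Fin.cons 0 c ᵥ* B) t = ∑ q, c q * B q.succ t := by
      simp [vecMul, dotProduct, Fin.sum_univ_succ]
    refine ⟨Fin.cons 0 c, fun k hk => ?_, fun t ht => ?_⟩
    · cases k using Fin.cases with
      | zero => rfl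
      | succ k => exact hc0 k (Fin.succ_le_succ_iff.mp hk)
    · rw [hvec]
      cases t using Fin.cases with
      | zero => simp [h0]
      | succ t => simpa [vecMul, dotProduct] using hc t (by simpa using ht)

end PrefixSpan

section Elimination

lemma exists_pivot_subPartner (a : Fin (n + 1) → K) :
    ∃ p : Option (Fin (n + 1)), (∀ j, p = some j → 0 < j) ∧
      ∃ ν : Fin n → K, ∀ k, a k.succ = ν k * subPartner a 0 p := by
  suffices h : ∃ p : Option (Fin (n + 1)), (∀ j, p = some j → 0 < j) ∧
      (subPartner a 0 p = 0 → ∀ k, a k = 0) by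
    obtain ⟨p, hp, hzero⟩ := h
    refine ⟨p, hp, fun k => a k.succ / subPartner a 0 p, fun k => ?_⟩
    by_cases hpiv : subPartner a 0 p = 0
    · simp [hpiv, hzero hpiv k.succ]
    · exact (div_mul_cancel₀ _ hpiv).symm
  by_cases h0 : a 0 = 0
  · by_cases hall : ∀ k, a k = 0
    · exact ⟨none, by simp, fun _ => hall⟩
    obtain ⟨j, hj⟩ := not_forall.mp hall
    have hj0 : j ≠ 0 := by
      rintro rfl
      exact hj h0
    refine ⟨some j, by simpa [Fin.pos_iff_ne_zero] using hj0, fun h => ?_⟩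
    simp [subPartner, h0, hj] at h
  · exact ⟨none, by simp, fun h => absurd h h0⟩

theorem exists_rowPrefixSpanned_subPartners :
    ∀ {n m : ℕ} (A : Matrix (Fin n) (Fin m) K), ∃ f : Fin n → Option (Fin n),
      (∀ i j, f i = some j → i < j) ∧ RowPrefixSpanned (subPartners f A)
  | 0, _, _ => ⟨fun _ => none, by simp, fun i => i.elim0⟩
  | _ + 1, 0, _ => ⟨fun _ => none, by simp, fun _ => ⟨0, by simp, fun t => t.elim0⟩⟩
  | n + 1, m + 1, A => by
    obtain ⟨p, hp, ν, hν⟩ := exists_pivot_subPartner fun k => A k 0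
    -- `g` is row `0` of the reduced matrix; subtracting multiples of it clears column `0`
    -- below it and leaves the Schur complement passed to the induction hypothesis.
    set g := subPartner A 0 p
    have hg0 : subPartner (fun k => A k 0) 0 p = g 0 := by cases p <;> rfl
    obtain ⟨f', hf', hD⟩ :=
      exists_rowPrefixSpanned_subPartners fun k s => A k.succ s.succ - ν k * g s.succ
    set f : Fin (n + 1) → Option (Fin (n + 1)) := Fin.cons p fun k => (f' k).map Fin.succ
    refine ⟨f, fun i j hij => ?_, ?_⟩
    · cases i using Fin.cases with
      | zero => exact hp j hij
      | succ i =>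
        obtain ⟨j', hj', rfl⟩ : ∃ j', f' i = some j' ∧ j'.succ = j := by simpa [f] using hij
        exact Fin.succ_lt_succ_iff.mpr (hf' i j' hj')
    have hrow0 : subPartners f A 0 = g := rfl
    have hrow : ∀ k, subPartners f A k.succ = subPartners f' (fun k => A k.succ) k := by
      intro k
      cases hk : f' k <;> simp [f, subPartners, subPartner, hk]
    apply rowPrefixSpanned_of_sub_vecMulVec _ (Fin.cons 0 (subPartners f' ν))
    apply rowPrefixSpanned_of_forall_succ_zero
    · intro k
      change subPartners f A k.succ 0 - subPartners f' ν k * subPartners f A 0 0 = 0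
      rw [hrow0, hrow, ← hg0]
      cases hk : f' k with
      | none => simp [subPartners, subPartner, hk, hν]
      | some j => simp [subPartners, subPartner, hk, hν]; ring
    · refine (congrArg RowPrefixSpanned ?_).mpr hD
      ext k s
      change subPartners f A k.succ s.succ - subPartners f' ν k * subPartners f A 0 s.succ = _
      rw [hrow0, hrow]
      cases hk : f' k with
      | none => simp [subPartners, subPartner, hk]
      | some j => simp [subPartners, subPartner, hk]; ring

end Elimination

end

theorem stmt8_general {K : Type*} [Field K] {n : ℕ}
    (E : (Fin n → K) →ₗ[K] (Fin n → K)) :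
    ∃ P : List (Fin n × (Fin n → K)),
      P.length ≤ 2 * n - 1 ∧
      (∀ x, runProg P x = E x) ∧
      (∃ M : Matrix (Fin n) (Fin n) K, P.take n = List.ofFn (fun i => (i, M i))) ∧
      (∀ ic ∈ P.drop n, ∃ i j : Fin n, i < j ∧
        ic = (i, (Pi.single i 1 + Pi.single j 1 : Fin n → K))) := by
  obtain ⟨f, hf, hspan⟩ := exists_rowPrefixSpanned_subPartners (LinearMap.toMatrix' E)
  obtain ⟨M, hM⟩ := hspan.exists_runProg_eq_mulVec
  have hlen : (List.ofFn fun i => (i, M i)).length = n := List.length_ofFn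
  refine ⟨(List.ofFn fun i => (i, M i)) ++ addProg f n, ?_, fun x => ?_,
    ⟨M, List.take_left' hlen⟩, ?_⟩
  · have hadd := length_addProg_le_pred (K := K) hf
    rw [List.length_append, hlen]
    omega
  · rw [runProg_append, hM, subPartners_mulVec, runProg_addProg_subPartners hf,
      LinearMap.toMatrix'_mulVec]
  · rw [List.drop_left' hlen]
    exact fun ic hic => mem_addProg hf hic

/-- Theorem 1: every linear map `E` is computed in place by a straight-line
program of at most `2n - 1` linear assignments, whose first `n` steps form the
sequential program `M^π` of some matrix `M` and whose remaining steps are of the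
form `x_i := x_i + x_j` with `i < j`. -/
theorem stmt8 {K : Type*} [Field K] {n : ℕ} (hn : 0 < n)
    (E : (Fin n → K) →ₗ[K] (Fin n → K)) :
    ∃ P : List (Fin n × (Fin n → K)),
      P.length ≤ 2 * n - 1 ∧
      (∀ x, runProg P x = E x) ∧
      (∃ M : Matrix (Fin n) (Fin n) K, P.take n = List.ofFn (fun i => (i, M i))) ∧
      (∀ ic ∈ P.drop n, ∃ i j : Fin n, i < j ∧
        ic = (i, (Pi.single i 1 + Pi.single j 1 : Fin n → K))) :=
  stmt8_general E
end

section
/- For every matrix M ∈ M_n(K) there exists a regular matrix dM (all diagonal entries 1) such that (dM)^s is similar to M, meaning (dM)^s agrees with M off the diagonal. -/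
/-!
Write `S = L + U` with `L` strictly lower and `U` upper triangular. Unwinding the in-place updates
gives the Gauss–Seidel relation `S^s = L * S^s + U`, i.e. `(1 - L) * S^s = U`, so for regular `S`
every leading principal block of `S^s` has determinant `1`. Row `i` of `S^s` depends only on rows
`≤ i` of `S`, and equals `L i ᵥ* S^s + U i`. One can therefore choose the rows of `S` one at a
time: the entries of row `i` left of the diagonal solve a linear system whose matrix is the
invertible leading `i × i` block of `S^s`, and the entries right of the diagonal then adjust the
remaining off-diagonal entries of row `i` of `S^s` directly.
-/

open Matrix

section Triangular

variable {ι α : Type*}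

def strictLowerPart [LinearOrder ι] [Zero α] (S : Matrix ι ι α) : Matrix ι ι α :=
  of fun i j => if j < i then S i j else 0

def upperPart [LinearOrder ι] [Zero α] (S : Matrix ι ι α) : Matrix ι ι α :=
  of fun i j => if i ≤ j then S i j else 0

variable [Fintype ι] [LinearOrder ι] {R : Type*} [CommRing R]

theorem det_one_sub_strictLowerPart (S : Matrix ι ι R) : (1 - strictLowerPart S).det = 1 := by
  rw [det_of_isLowerTriangular]
  · simp [strictLowerPart]
  · intro i j (hij : i < j)
    simp [strictLowerPart, hij.ne, hij.not_gt]

theorem det_upperPart (S : Matrix ι ι R) : (upperPart S).det = ∏ i, S i i := by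
  rw [det_of_isUpperTriangular]
  · simp [upperPart]
  · intro i j (hij : j < i)
    simp [upperPart, hij.not_ge]

end Triangular

section SequentialMatrix

variable {K : Type*} [Field K] {n : ℕ}

def seqStep (M : Matrix (Fin n) (Fin n) K) (v : Fin n → K) (i : Fin n) : Fin n → K :=
  Function.update v i (∑ j, M i j * v j)

theorem foldl_seqStep_of_notMem (M : Matrix (Fin n) (Fin n) K) {l : List (Fin n)} {i : Fin n}
    (hi : i ∉ l) (x : Fin n → K) : l.foldl (seqStep M) x i = x i := by
  induction l generalizing x with
  | nil => rfl
  | cons a l ih =>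
    rw [List.mem_cons, not_or] at hi
    rw [List.foldl_cons, ih hi.2, seqStep, Function.update_of_ne hi.1]

theorem foldl_seqStep_of_mem (M : Matrix (Fin n) (Fin n) K) {l : List (Fin n)}
    (hl : l.Pairwise (· < ·)) (x : Fin n → K) {i : Fin n} (hi : i ∈ l) :
    l.foldl (seqStep M) x i =
      ∑ j, M i j * if j < i ∧ j ∈ l then l.foldl (seqStep M) x j else x j := by
  induction l using List.reverseRecOn with
  | nil => simp at hi
  | append_singleton l a ih =>
    obtain ⟨hl, -, hla⟩ := List.pairwise_append.mp hl
    simp only [List.mem_singleton, forall_eq] at hla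
    have hy : ∀ j, j ≠ a → seqStep M (l.foldl (seqStep M) x) a j = l.foldl (seqStep M) x j :=
      fun j hj => Function.update_of_ne hj _ _
    simp only [List.foldl_append, List.foldl_cons, List.foldl_nil, List.mem_append,
      List.mem_singleton] at hi ⊢
    rcases hi with hi | rfl
    · rw [hy i (hla i hi).ne, ih hl hi]
      refine Finset.sum_congr rfl fun j _ => ?_
      by_cases hja : j = a
      · subst hja
        simp [(hla i hi).not_gt]
      · simp only [hja, or_false, hy j hja]
    · refine (Function.update_self _ _ _).trans (Finset.sum_congr rfl fun j _ => ?_)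
      by_cases hj : j ∈ l
      · simp only [hj, hla j hj, hy j (hla j hj).ne, true_or, and_self, if_true]
      · simp only [hj, false_or]
        rw [if_neg fun h => h.1.ne h.2, foldl_seqStep_of_notMem M hj]

theorem seqMap_apply (M : Matrix (Fin n) (Fin n) K) (x : Fin n → K) (i : Fin n) :
    seqMap M x i = ∑ j, M i j * if j < i then seqMap M x j else x j := by
  have h : seqMap M x = (List.finRange n).foldl (seqStep M) x := Fin.foldl_eq_foldl_finRange _ _
  rw [h, foldl_seqStep_of_mem M (List.pairwise_lt_finRange n) x (List.mem_finRange i)]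
  simp [List.mem_finRange]

theorem seqMat_eq_strictLowerPart_mul_add_upperPart (S : Matrix (Fin n) (Fin n) K) :
    seqMat S = strictLowerPart S * seqMat S + upperPart S := by
  ext i j
  have h : ∀ k, S i k * (if k < i then seqMat S k j else (Pi.single j 1 : Fin n → K) k) =
      strictLowerPart S i k * seqMat S k j + if k = j then upperPart S i k else 0 := by
    intro k
    by_cases hk : k < i
    · simp [strictLowerPart, upperPart, hk, hk.not_ge, seqMat]
    · simp [strictLowerPart, upperPart, hk, Pi.single_apply, not_lt.mp hk]
  refine (seqMap_apply _ _ i).trans ((Finset.sum_congr rfl fun k _ => h k).trans ?_)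
  rw [Finset.sum_add_distrib, Finset.sum_ite_eq' Finset.univ j, if_pos (Finset.mem_univ _)]
  rfl

theorem det_seqMat {S : Matrix (Fin n) (Fin n) K} (hS : ∀ i, S i i = 1) : (seqMat S).det = 1 := by
  have h : (1 - strictLowerPart S) * seqMat S = upperPart S := by
    rw [sub_mul, one_mul, sub_eq_iff_eq_add']
    exact seqMat_eq_strictLowerPart_mul_add_upperPart S
  simpa [det_mul, det_one_sub_strictLowerPart, det_upperPart, hS] using congrArg det h

theorem seqMat_row_congr {A B : Matrix (Fin n) (Fin n) K} {i : Fin n} (h : ∀ k ≤ i, A k = B k) :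
    seqMat A i = seqMat B i := by
  induction i using WellFoundedLT.induction with
  | ind i ih =>
  funext j
  rw [seqMat_eq_strictLowerPart_mul_add_upperPart A,
    seqMat_eq_strictLowerPart_mul_add_upperPart B]
  simp only [Matrix.add_apply, mul_apply, strictLowerPart, upperPart, of_apply, h i le_rfl]
  congr 1
  refine Finset.sum_congr rfl fun k _ => ?_
  split_ifs with hk
  · rw [ih k hk fun l hl => h l (hl.trans hk.le)]
  · rw [zero_mul, zero_mul]

def truncateRows (S : Matrix (Fin n) (Fin n) K) (i₀ : Fin n) : Matrix (Fin n) (Fin n) K :=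
  of fun k j => if k < i₀ then S k j else (1 : Matrix (Fin n) (Fin n) K) k j

theorem seqMat_truncateRows_of_lt (S : Matrix (Fin n) (Fin n) K) {i₀ k : Fin n} (hk : k < i₀) :
    seqMat (truncateRows S i₀) k = seqMat S k :=
  seqMat_row_congr fun l hl => funext fun j => by simp [truncateRows, hl.trans_lt hk]

theorem seqMat_truncateRows_of_le (S : Matrix (Fin n) (Fin n) K) {i₀ k : Fin n} (hk : i₀ ≤ k) :
    seqMat (truncateRows S i₀) k = (1 : Matrix (Fin n) (Fin n) K) k := by
  have hrow : ∀ l, truncateRows S i₀ k l = (1 : Matrix (Fin n) (Fin n) K) k l :=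
    fun l => if_neg hk.not_gt
  funext j
  rw [seqMat_eq_strictLowerPart_mul_add_upperPart]
  simp only [Matrix.add_apply, mul_apply, strictLowerPart, upperPart, of_apply, hrow]
  rw [Finset.sum_eq_zero fun l _ => ?_, zero_add]
  · split_ifs with hkj
    · rfl
    · exact (one_apply_ne fun h => hkj h.le).symm
  · split_ifs with hlk
    · rw [one_apply_ne hlk.ne', zero_mul]
    · exact zero_mul _

/- The leading `i₀ × i₀` block of `S^s` is invertible: it is also the leading block of
`(truncateRows S i₀)^s`, whose other rows are those of the identity and whose determinant is `1`. -/
theorem exists_vecMul_seqMat_eq {S : Matrix (Fin n) (Fin n) K} (hS : ∀ i, S i i = 1) (i₀ : Fin n)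
    (t : Fin n → K) :
    ∃ c : Fin n → K, (∀ k, i₀ ≤ k → c k = 0) ∧ ∀ j < i₀, (c ᵥ* seqMat S) j = t j := by
  have hT₀ : IsUnit (seqMat (truncateRows S i₀)).det := by
    rw [det_seqMat fun i => ?_]
    · exact isUnit_one
    · by_cases hi : i < i₀ <;> simp [truncateRows, hi, hS]
  obtain ⟨d, hd⟩ : ∃ d, d ᵥ* seqMat (truncateRows S i₀) = t :=
    ⟨t ᵥ* (seqMat (truncateRows S i₀))⁻¹, by rw [vecMul_vecMul, nonsing_inv_mul _ hT₀, vecMul_one]⟩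
  refine ⟨fun k => if k < i₀ then d k else 0, fun k hk => if_neg hk.not_gt, fun j hj => ?_⟩
  rw [← hd]
  simp only [vecMul, dotProduct]
  refine Finset.sum_congr rfl fun k _ => ?_
  by_cases hk : k < i₀
  · rw [if_pos hk, seqMat_truncateRows_of_lt S hk]
  · rw [if_neg hk, zero_mul, seqMat_truncateRows_of_le S (not_lt.mp hk),
      one_apply_ne (hj.trans_le (not_lt.mp hk)).ne', mul_zero]

theorem exists_regular_seqMat_eq_offDiag_next_row (M : Matrix (Fin n) (Fin n) K)
    {S : Matrix (Fin n) (Fin n) K} (hS : ∀ i, S i i = 1) (i₀ : Fin n)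
    (hSM : ∀ i j, i ≠ j → i < i₀ → seqMat S i j = M i j) :
    ∃ S' : Matrix (Fin n) (Fin n) K,
      (∀ i, S' i i = 1) ∧ ∀ i j, i ≠ j → i ≤ i₀ → seqMat S' i j = M i j := by
  obtain ⟨c, hc₀, hc⟩ := exists_vecMul_seqMat_eq hS i₀ (M i₀)
  set r : Fin n → K := fun j =>
    if j < i₀ then c j else if j = i₀ then 1 else M i₀ j - (c ᵥ* seqMat S) j
  have hrows : ∀ k < i₀, seqMat (S.updateRow i₀ r) k = seqMat S k :=
    fun k hk => seqMat_row_congr fun l hl => updateRow_ne (hl.trans_lt hk).ne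
  have hrow : ∀ j, seqMat (S.updateRow i₀ r) i₀ j =
      (c ᵥ* seqMat S) j + if i₀ ≤ j then r j else 0 := by
    intro j
    rw [seqMat_eq_strictLowerPart_mul_add_upperPart]
    simp only [Matrix.add_apply, mul_apply, strictLowerPart, upperPart, of_apply, updateRow_self,
      vecMul, dotProduct]
    congr 1
    refine Finset.sum_congr rfl fun k _ => ?_
    by_cases hk : k < i₀
    · rw [if_pos hk, hrows k hk]
      exact congrArg (· * seqMat S k j) (if_pos hk)
    · rw [if_neg hk, hc₀ k (not_lt.mp hk), zero_mul, zero_mul]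
  refine ⟨S.updateRow i₀ r, fun i => ?_, fun i j hij hi => ?_⟩
  · by_cases hi : i = i₀
    · subst hi; simp [r]
    · rw [updateRow_ne hi]; exact hS i
  · rcases hi.lt_or_eq with hi | rfl
    · rw [hrows i hi]; exact hSM i j hij hi
    · rw [hrow]
      rcases lt_or_gt_of_ne hij.symm with hj | hj
      · rw [if_neg hj.not_ge, add_zero, hc j hj]
      · simp [r, hj.le, hj.not_gt, hj.ne']

theorem exists_regular_seqMat_eq_offDiag_first_rows (M : Matrix (Fin n) (Fin n) K) (m : ℕ) :
    ∃ S : Matrix (Fin n) (Fin n) K,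
      (∀ i, S i i = 1) ∧ ∀ i j : Fin n, i ≠ j → (i : ℕ) < m → seqMat S i j = M i j := by
  induction m with
  | zero => exact ⟨1, one_apply_eq, fun i j _ hi => absurd hi (Nat.not_lt_zero _)⟩
  | succ m ih =>
    obtain ⟨S, hS, hSM⟩ := ih
    by_cases hm : m < n
    · obtain ⟨S', hS', hS'M⟩ := exists_regular_seqMat_eq_offDiag_next_row M hS ⟨m, hm⟩ hSM
      exact ⟨S', hS', fun i j hij hi => hS'M i j hij (Nat.lt_succ_iff.mp hi)⟩
    · exact ⟨S, hS, fun i j hij _ => hSM i j hij (by omega)⟩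

end SequentialMatrix

/-- Theorem 2: for every matrix `M` there is a regular matrix `dM` such that
`(dM)^s` is similar to `M`, i.e. agrees with `M` off the diagonal. -/
theorem stmt9 {K : Type*} [Field K] {n : ℕ} (M : Matrix (Fin n) (Fin n) K) :
    ∃ dM : Matrix (Fin n) (Fin n) K, (∀ i, dM i i = 1) ∧
      ∀ i j : Fin n, i ≠ j → seqMat dM i j = M i j := by
  obtain ⟨dM, hdiag, hM⟩ := exists_regular_seqMat_eq_offDiag_first_rows M n
  exact ⟨dM, hdiag, fun i j hij => hM i j hij i.isLt⟩
end
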